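/- Let E, F ∈ ℝⁿˣⁿ, G ∈ ℝᵖˣⁿ, let P be an n×n symmetric positive-definite matrix, and let μ > 0. If F'P⁻¹F + P − E − E' + G'G ⪯ −μI, then E + E' ⪰ μI, and for every Δ ∈ ℝⁿ the contraction inequality |FΔ|²_{P⁻¹} − |EΔ|²_{P⁻¹} + |GΔ|² ≤ −μ|Δ|² holds. -/

import Mathlib

/-!
Adding the positive semidefinite matrices `F'P⁻¹F`, `P` and `G'G` to the convex contraction
condition leaves `E + E' - μI ⪰ 0`. For the contraction inequality, completing the square
`0 ≤ |EΔ - PΔ|²_{P⁻¹}` gives `|EΔ|²_{P⁻¹} ≥ Δ'(E + E' - P)Δ`, and substituting this into the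
quadratic form of the convex contraction condition at `Δ` yields the claim.
-/

open Matrix

namespace Matrix

variable {m n : Type*} [Fintype m] [Fintype n]

lemma dotProduct_transpose_mulVec_eq_mulVec_dotProduct {α : Type*} [NonUnitalCommSemiring α]
    (A : Matrix m n α) (x : n → α) (y : m → α) : x ⬝ᵥ (Aᵀ *ᵥ y) = (A *ᵥ x) ⬝ᵥ y := by
  rw [dotProduct_transpose_mulVec, dotProduct_comm]

lemma PosSemidef.transpose_mul_mul_same {M : Matrix m m ℝ} (hM : M.PosSemidef)
    (A : Matrix m n ℝ) : (Aᵀ * M * A).PosSemidef := by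
  simpa only [conjTranspose_eq_transpose_of_trivial] using hM.conjTranspose_mul_mul_same A

lemma posSemidef_transpose_mul_self (A : Matrix m n ℝ) : (Aᵀ * A).PosSemidef := by
  simpa only [conjTranspose_eq_transpose_of_trivial] using posSemidef_conjTranspose_mul_self A

variable [DecidableEq n]

lemma PosDef.two_mul_dotProduct_le {P : Matrix n n ℝ} (hP : P.PosDef) (x y : n → ℝ) :
    2 * (x ⬝ᵥ y) ≤ x ⬝ᵥ (P⁻¹ *ᵥ x) + y ⬝ᵥ (P *ᵥ y) := by
  have hsq := hP.inv.posSemidef.dotProduct_mulVec_nonneg (x - P *ᵥ y)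
  have hPinvP : P⁻¹ *ᵥ (P *ᵥ y) = y := by
    rw [mulVec_mulVec, nonsing_inv_mul P ((isUnit_iff_isUnit_det P).mp hP.isUnit), one_mulVec]
  have hPinv_symm : (P⁻¹)ᵀ = P⁻¹ := (isHermitian_iff_isSymm.mp hP.inv.isHermitian).eq
  have hcross : (P *ᵥ y) ⬝ᵥ (P⁻¹ *ᵥ x) = x ⬝ᵥ y := by
    rw [← hPinv_symm, dotProduct_transpose_mulVec, hPinvP]
  simp only [star_trivial, mulVec_sub, dotProduct_sub, sub_dotProduct, hPinvP, hcross] at hsq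
  linarith [dotProduct_comm x y, dotProduct_comm (P *ᵥ y) y]

end Matrix

theorem stmt12_general {n p : ℕ}
    (E F : Matrix (Fin n) (Fin n) ℝ) (G : Matrix (Fin p) (Fin n) ℝ)
    (P : Matrix (Fin n) (Fin n) ℝ) (hP : P.PosDef) (μ : ℝ)
    (hcontr : ((-μ) • (1 : Matrix (Fin n) (Fin n) ℝ)
        - (Fᵀ * P⁻¹ * F + P - E - Eᵀ + Gᵀ * G)).PosSemidef) :
    (E + Eᵀ - μ • (1 : Matrix (Fin n) (Fin n) ℝ)).PosSemidef ∧
    (∀ Δ : Fin n → ℝ,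
      (F *ᵥ Δ) ⬝ᵥ (P⁻¹ *ᵥ (F *ᵥ Δ)) - (E *ᵥ Δ) ⬝ᵥ (P⁻¹ *ᵥ (E *ᵥ Δ))
        + (G *ᵥ Δ) ⬝ᵥ (G *ᵥ Δ) ≤ -μ * (Δ ⬝ᵥ Δ)) := by
  constructor
  · have hsum := ((hcontr.add (hP.inv.posSemidef.transpose_mul_mul_same F)).add
      hP.posSemidef).add (posSemidef_transpose_mul_self G)
    convert hsum using 1
    rw [neg_smul]
    abel
  · intro Δ
    have hquad := hcontr.dotProduct_mulVec_nonneg Δ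
    simp only [star_trivial, sub_mulVec, add_mulVec, smul_mulVec, one_mulVec, dotProduct_sub,
      dotProduct_add, dotProduct_smul, smul_eq_mul, ← mulVec_mulVec,
      dotProduct_transpose_mulVec_eq_mulVec_dotProduct] at hquad
    have hsquare := hP.two_mul_dotProduct_le (E *ᵥ Δ) Δ
    linarith [dotProduct_comm Δ (E *ᵥ Δ)]

/-- If the convex contraction condition
`F'P⁻¹F + P − E − E' + G'G ⪯ −μI` holds (with `P` symmetric positive definite,
`μ > 0`), then `E + E' ⪰ μI`, and for every `Δ` the contraction inequality
`|FΔ|²_{P⁻¹} − |EΔ|²_{P⁻¹} + |GΔ|² ≤ −μ|Δ|²` holds. -/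
theorem stmt12 {n p : ℕ}
    (E F : Matrix (Fin n) (Fin n) ℝ) (G : Matrix (Fin p) (Fin n) ℝ)
    (P : Matrix (Fin n) (Fin n) ℝ) (hP : P.PosDef) (μ : ℝ) (hμ : 0 < μ)
    (hcontr : ((-μ) • (1 : Matrix (Fin n) (Fin n) ℝ)
        - (Fᵀ * P⁻¹ * F + P - E - Eᵀ + Gᵀ * G)).PosSemidef) :
    (E + Eᵀ - μ • (1 : Matrix (Fin n) (Fin n) ℝ)).PosSemidef ∧
    (∀ Δ : Fin n → ℝ,
      (F *ᵥ Δ) ⬝ᵥ (P⁻¹ *ᵥ (F *ᵥ Δ)) - (E *ᵥ Δ) ⬝ᵥ (P⁻¹ *ᵥ (E *ᵥ Δ))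
        + (G *ᵥ Δ) ⬝ᵥ (G *ᵥ Δ) ≤ -μ * (Δ ⬝ᵥ Δ)) :=
  stmt12_general E F G P hP μ hcontr
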